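/- arXiv:2112.04166 — 2 statements merged into one kernel-verified Lean document; each statement's English description precedes it below -/
import Mathlib

section
/- Every WMMS-fair allocation is 1/n-NMMS. -/
open Finset

/-- An allocation: a partition of the item set `Fin m` into `n` (possibly empty) bundles. -/
def IsAllocation {n m : ℕ} (A : Fin n → Finset (Fin m)) : Prop :=
  (∀ i j : Fin n, i ≠ j → Disjoint (A i) (A j)) ∧
    Finset.univ.biUnion A = (Finset.univ : Finset (Fin m))

/-- Additive utility of agent `i` for a bundle `S`. -/
def util {n m : ℕ} (u : Fin n → Fin m → ℝ) (i : Fin n) (S : Finset (Fin m)) : ℝ :=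
  ∑ g ∈ S, u i g

/-- Weighted envy-freeness up to (x, y)-fraction of one item. -/
def WEF {n m : ℕ} (w : Fin n → ℝ) (u : Fin n → Fin m → ℝ) (A : Fin n → Finset (Fin m))
    (x y : ℝ) : Prop :=
  ∀ i j : Fin n, ∃ B : Finset (Fin m), B ⊆ A j ∧ B.card ≤ 1 ∧
    (util u i (A i) + y * util u i B) / w i ≥ (util u i (A j) - x * util u i B) / w j

/-- Weighted proportionality up to (x, y)-fraction of one item. -/
def WPROP {n m : ℕ} (w : Fin n → ℝ) (u : Fin n → Fin m → ℝ) (A : Fin n → Finset (Fin m))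
    (x y : ℝ) : Prop :=
  ∀ i : Fin n, ∃ B : Finset (Fin m), B ⊆ Finset.univ \ A i ∧ B.card ≤ 1 ∧
    (util u i (A i) + y * util u i B) / w i ≥
      (util u i Finset.univ - (n : ℝ) * x * util u i B) / (∑ j, w j)

/-- The stronger notion WPROP*(x,y). -/
def WPROPstar {n m : ℕ} (w : Fin n → ℝ) (u : Fin n → Fin m → ℝ) (A : Fin n → Finset (Fin m))
    (x y : ℝ) : Prop :=
  ∀ i : Fin n, ∃ B : Finset (Fin m), B ⊆ Finset.univ \ A i ∧ B.card ≤ 1 ∧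
    ∃ Bf : Fin n → Finset (Fin m),
      (∀ j : Fin n, j ≠ i → Bf j ⊆ A j ∧ (Bf j).card ≤ 1) ∧
      (util u i (A i) + y * util u i B) / w i ≥
        (util u i Finset.univ - x * ∑ j ∈ Finset.univ.erase i, util u i (Bf j)) / (∑ j, w j)

/-- The (1-out-of-n) maximin share of agent `i`. -/
noncomputable def MMS {n m : ℕ} (u : Fin n → Fin m → ℝ) (i : Fin n) : ℝ :=
  sSup {v : ℝ | ∃ Z : Fin n → Finset (Fin m), IsAllocation Z ∧ v = ⨅ j, util u i (Z j)}

/-- The normalized maximin share of agent `i`. -/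
noncomputable def NMMS {n m : ℕ} (w : Fin n → ℝ) (u : Fin n → Fin m → ℝ) (i : Fin n) : ℝ :=
  (w i / ∑ j, w j) * (n : ℝ) * MMS u i

/-- The weighted maximin share of agent `i`. -/
noncomputable def WMMS {n m : ℕ} (w : Fin n → ℝ) (u : Fin n → Fin m → ℝ) (i : Fin n) : ℝ :=
  w i * sSup {v : ℝ | ∃ Z : Fin n → Finset (Fin m), IsAllocation Z ∧
    v = ⨅ j, util u i (Z j) / w j}

/-
Fix an agent `i` and any partition `Z` of the items. Since `w j ≤ w_N` and utilities are
nonnegative, `u_i(Z j) / w j ≥ u_i(Z j) / w_N ≥ (min_k u_i(Z k)) / w_N` for every bundle, so the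
weighted value of `Z` is at least its unweighted value divided by `w_N`. Taking suprema gives
`WMMS_i ≥ w_i · MMS_i / w_N = NMMS_i / n`.
-/

theorem ciInf_div_sum_le_ciInf_div {ι : Type*} [Fintype ι] [Nonempty ι] {a w : ι → ℝ}
    (ha : ∀ j, 0 ≤ a j) (hw : ∀ j, 0 < w j) :
    (⨅ j, a j) / ∑ j, w j ≤ ⨅ j, a j / w j :=
  le_ciInf fun j => calc
    (⨅ k, a k) / ∑ k, w k ≤ a j / ∑ k, w k := by
      gcongr
      · exact sum_nonneg fun k _ => (hw k).le
      · exact ciInf_le (Finite.bddBelow_range a) j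
    _ ≤ a j / w j :=
      div_le_div_of_nonneg_left (ha j) (hw j) (single_le_sum (fun k _ => (hw k).le) (mem_univ j))

section Shares

variable {n m : ℕ}

theorem isAllocation_ite_univ (i : Fin n) :
    IsAllocation fun j => if j = i then (univ : Finset (Fin m)) else ∅ := by
  refine ⟨fun a b hab => ?_, eq_univ_of_forall fun g => mem_biUnion.2 ⟨i, mem_univ i, by simp⟩⟩
  by_cases ha : a = i <;> by_cases hb : b = i <;> simp_all

theorem bddAbove_setOf_isAllocation (f : (Fin n → Finset (Fin m)) → ℝ) :
    BddAbove {v : ℝ | ∃ Z, IsAllocation Z ∧ v = f Z} :=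
  ((Set.finite_range f).subset (by rintro _ ⟨Z, _, rfl⟩; exact ⟨Z, rfl⟩)).bddAbove

theorem util_nonneg {u : Fin n → Fin m → ℝ} {i : Fin n} (hu : ∀ g, 0 ≤ u i g)
    (S : Finset (Fin m)) : 0 ≤ util u i S :=
  sum_nonneg fun g _ => hu g

theorem MMS_div_sum_le_WMMS_div {w : Fin n → ℝ} (hw : ∀ j, 0 < w j) {u : Fin n → Fin m → ℝ}
    {i : Fin n} (hu : ∀ g, 0 ≤ u i g) :
    MMS u i / ∑ j, w j ≤ WMMS w u i / w i := by
  have : Nonempty (Fin n) := ⟨i⟩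
  have hW : 0 < ∑ j, w j := sum_pos (fun j _ => hw j) univ_nonempty
  rw [WMMS, mul_div_cancel_left₀ _ (hw i).ne', div_le_iff₀ hW]
  refine csSup_le ⟨_, _, isAllocation_ite_univ i, rfl⟩ ?_
  rintro _ ⟨Z, hZ, rfl⟩
  rw [← div_le_iff₀ hW]
  exact (ciInf_div_sum_le_ciInf_div (fun j => util_nonneg hu (Z j)) hw).trans
    (le_csSup (bddAbove_setOf_isAllocation _) ⟨Z, hZ, rfl⟩)

theorem inv_mul_NMMS (w : Fin n → ℝ) (u : Fin n → Fin m → ℝ) (i : Fin n) :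
    (1 / (n : ℝ)) * NMMS w u i = w i * (MMS u i / ∑ j, w j) := by
  have : (n : ℝ) ≠ 0 := Nat.cast_ne_zero.2 (Fin.pos i).ne'
  rw [NMMS]
  field_simp

end Shares

theorem wmms_implies_inv_n_nmms_general (n m : ℕ)
    (w : Fin n → ℝ) (hw : ∀ i, 0 < w i)
    (u : Fin n → Fin m → ℝ) (hu : ∀ i g, 0 ≤ u i g)
    (A : Fin n → Finset (Fin m))
    (hWMMS : ∀ i, util u i (A i) ≥ WMMS w u i) :
    ∀ i, util u i (A i) ≥ (1 / (n : ℝ)) * NMMS w u i := by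
  intro i
  calc (1 / (n : ℝ)) * NMMS w u i = w i * (MMS u i / ∑ j, w j) := inv_mul_NMMS w u i
    _ ≤ w i * (WMMS w u i / w i) :=
        mul_le_mul_of_nonneg_left (MMS_div_sum_le_WMMS_div hw (hu i)) (hw i).le
    _ = WMMS w u i := mul_div_cancel₀ _ (hw i).ne'
    _ ≤ util u i (A i) := hWMMS i

/-- Every WMMS-fair allocation is 1/n-NMMS. -/
theorem wmms_implies_inv_n_nmms (n m : ℕ) (hn : 2 ≤ n)
    (w : Fin n → ℝ) (hw : ∀ i, 0 < w i)
    (u : Fin n → Fin m → ℝ) (hu : ∀ i g, 0 ≤ u i g)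
    (A : Fin n → Finset (Fin m)) (hA : IsAllocation A)
    (hWMMS : ∀ i, util u i (A i) ≥ WMMS w u i) :
    ∀ i, util u i (A i) ≥ (1 / (n : ℝ)) * NMMS w u i :=
  wmms_implies_inv_n_nmms_general n m w hw u hu A hWMMS
end

section
/- In an instance in which all items are identical, every weighted egalitarian (WEG) allocation satisfies both lower quota and upper quota, i.e., ⌊q_i⌋ ≤ |A_i| ≤ ⌈q_i⌉ for every agent i. -/
open Finset

/-- For identical items: the vector of differences between the fraction of items
received and the weight share. -/
noncomputable def dvec {n m : ℕ} (w : Fin n → ℝ) (A : Fin n → Finset (Fin m)) :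
    Fin n → ℝ :=
  fun i => ((A i).card : ℝ) / (m : ℝ) - w i / ∑ j, w j

/-- A weighted egalitarian (WEG) allocation: leximin-optimal for `dvec`, i.e., its
nondecreasingly sorted difference vector is lexicographically maximal. -/
noncomputable def IsWEG {n m : ℕ} (w : Fin n → ℝ) (A : Fin n → Finset (Fin m)) : Prop :=
  IsAllocation A ∧
    ∀ A' : Fin n → Finset (Fin m), IsAllocation A' →
      toLex (dvec w A' ∘ Tuple.sort (dvec w A')) ≤ toLex (dvec w A ∘ Tuple.sort (dvec w A))

/-! If agent `b` exceeds agent `a` in items-minus-quota by more than one, handing one item of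
`b` over to `a` leaves every other agent untouched and lifts `a` without pushing `b` down to
`a`'s former level; this strictly improves the sorted difference vector in the leximin order.
So in a WEG allocation the excesses `|A_i| - q_i` are within one of each other. They sum to
zero, so each lies in `(-1, 1)`, which is exactly `⌊q_i⌋ ≤ |A_i| ≤ ⌈q_i⌉`. -/

section Allocation

variable {n m : ℕ}

theorem isAllocation_iff (A : Fin n → Finset (Fin m)) :
    IsAllocation A ↔ ∀ g, ∃! i, g ∈ A i := by
  constructor
  · rintro ⟨hdisj, hcover⟩ g
    obtain ⟨i, -, hi⟩ := mem_biUnion.1 (hcover ▸ mem_univ g)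
    refine ⟨i, hi, fun j hj => ?_⟩
    by_contra hji
    exact disjoint_left.1 (hdisj j i hji) hj hi
  · intro h
    refine ⟨fun i j hij => disjoint_left.2 fun g hi hj => hij ?_, ?_⟩
    · exact (h g).unique hi hj
    · ext g
      simpa using (h g).exists

theorem IsAllocation.sum_card {A : Fin n → Finset (Fin m)} (hA : IsAllocation A) :
    ∑ i, (A i).card = m := by
  rw [← card_biUnion fun i _ j _ hij => hA.1 i j hij, hA.2, card_univ, Fintype.card_fin]

def moveItem (A : Fin n → Finset (Fin m)) (g : Fin m) (a : Fin n) :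
    Fin n → Finset (Fin m) :=
  fun i => if i = a then insert g (A a) else (A i).erase g

theorem mem_moveItem (A : Fin n → Finset (Fin m)) (g x : Fin m)
    (a i : Fin n) : x ∈ moveItem A g a i ↔ if x = g then i = a else x ∈ A i := by
  unfold moveItem
  split_ifs <;> simp_all

theorem IsAllocation.moveItem {A : Fin n → Finset (Fin m)}
    (hA : IsAllocation A) (g : Fin m) (a : Fin n) : IsAllocation (moveItem A g a) := by
  rw [isAllocation_iff] at hA ⊢
  intro x
  simp only [mem_moveItem]
  split_ifs
  · exact existsUnique_eq
  · exact hA x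

end Allocation

section Leximin

variable {n : ℕ}

theorem Monotone.lt_card_filter_le_iff {s : Fin n → ℝ} (hs : Monotone s) (j : Fin n) (t : ℝ) :
    (j : ℕ) < #{i | s i ≤ t} ↔ s j ≤ t := by
  constructor
  · intro hj
    by_contra hjt
    have hsub : ({i | s i ≤ t} : Finset (Fin n)) ⊆ Iio j := fun i hi => by
      simp only [mem_filter, mem_univ, true_and] at hi
      exact mem_Iio.2 (lt_of_not_ge fun hji => hjt (le_trans (hs hji) hi))
    exact absurd (card_le_card hsub) (by simpa using hj)
  · intro hjt
    have hsub : Iic j ⊆ ({i | s i ≤ t} : Finset (Fin n)) := fun i hi => by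
      simpa using le_trans (hs (mem_Iic.1 hi)) hjt
    simpa using card_le_card hsub

theorem card_filter_comp_perm (σ : Equiv.Perm (Fin n)) (f : Fin n → ℝ) (t : ℝ) :
    #{i | f (σ i) ≤ t} = #{i | f i ≤ t} :=
  card_equiv σ (by simp)

theorem Monotone.le_apply_of_card_filter_le_eq {s s' : Fin n → ℝ} (hs : Monotone s)
    (hs' : Monotone s') {t : ℝ} (hbelow : ∀ u < t, #{i | s i ≤ u} = #{i | s' i ≤ u})
    {j : Fin n} (hj : s' j ≤ t) : s' j ≤ s j := by
  by_contra! hlt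
  have : (j : ℕ) < #{i | s' i ≤ s j} := by
    rw [← hbelow _ (hlt.trans_le hj), hs.lt_card_filter_le_iff]
  exact (hs'.lt_card_filter_le_iff j _ |>.1 this).not_gt hlt

/-- The vectors first differ at index `#{i | s' i ≤ t}`, where `s` is smaller. -/
theorem Monotone.toLex_lt_of_card_filter_le {s s' : Fin n → ℝ} (hs : Monotone s)
    (hs' : Monotone s') {t : ℝ} (hbelow : ∀ u < t, #{i | s i ≤ u} = #{i | s' i ≤ u})
    (hat : #{i | s' i ≤ t} < #{i | s i ≤ t}) : toLex s < toLex s' := by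
  set k : Fin n := ⟨#{i | s' i ≤ t}, hat.trans_le (card_le_univ _ |>.trans_eq (by simp))⟩
  have hk : (k : ℕ) < #{i | s i ≤ t} := hat
  refine ⟨k, fun j hj => le_antisymm ?_ ?_, ?_⟩
  · have hjt : s j ≤ t := (hs.lt_card_filter_le_iff j t).1 (lt_trans hj hk)
    exact hs'.le_apply_of_card_filter_le_eq hs (fun u hu => (hbelow u hu).symm) hjt
  · exact hs.le_apply_of_card_filter_le_eq hs' hbelow ((hs'.lt_card_filter_le_iff j t).1 hj)
  · exact ((hs.lt_card_filter_le_iff k t).1 hk).trans_lt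
      (not_le.1 fun h => (hs'.lt_card_filter_le_iff k t).2 h |>.false)

theorem toLex_sort_lt_of_raise {f f' : Fin n → ℝ} {a b : Fin n}
    (hsame : ∀ k, k ≠ a → k ≠ b → f' k = f k) (hab : f a ≤ f b) (ha : f a < f' a)
    (hb : f a < f' b) : toLex (f ∘ Tuple.sort f) < toLex (f' ∘ Tuple.sort f') := by
  refine (Tuple.monotone_sort f).toLex_lt_of_card_filter_le (Tuple.monotone_sort f')
    (t := f a) (fun u hu => ?_) ?_ <;>
    simp only [Function.comp_apply, card_filter_comp_perm]
  · congr 1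
    refine filter_congr fun i _ => ?_
    obtain rfl | hia := eq_or_ne i a
    · constructor <;> intro h <;> linarith
    obtain rfl | hib := eq_or_ne i b
    · constructor <;> intro h <;> linarith
    rw [hsame i hia hib]
  · refine card_lt_card <| (ssubset_iff_of_subset fun i hi => ?_).2 ⟨a, by simpa using ha⟩
    simp only [mem_filter, mem_univ, true_and] at hi ⊢
    have hia : i ≠ a := by rintro rfl; exact hi.not_gt ha
    have hib : i ≠ b := by rintro rfl; exact hi.not_gt hb
    rwa [← hsame i hia hib]

end Leximin

section Quota

variable {n m : ℕ}

noncomputable def quota (w : Fin n → ℝ) (m : ℕ) (i : Fin n) : ℝ :=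
  w i / (∑ j, w j) * m

theorem IsAllocation.sum_card_sub_quota {w : Fin n → ℝ} (hw : ∑ j, w j ≠ 0)
    {A : Fin n → Finset (Fin m)} (hA : IsAllocation A) :
    ∑ j, ((A j).card - quota w m j) = 0 := by
  simp only [quota, sum_sub_distrib, ← sum_mul, ← sum_div, div_self hw, ← Nat.cast_sum,
    hA.sum_card]
  ring

theorem card_sub_quota_eq_mul_dvec (hm : m ≠ 0) (w : Fin n → ℝ) (A : Fin n → Finset (Fin m))
    (i : Fin n) : (A i).card - quota w m i = m * dvec w A i := by
  simp only [dvec, quota]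
  field_simp

theorem IsWEG.card_sub_quota_le {w : Fin n → ℝ} {A : Fin n → Finset (Fin m)}
    (hA : IsWEG w A) (a : Fin n) {b : Fin n} (hb : (A b).Nonempty) :
    (A b).card - quota w m b ≤ (A a).card - quota w m a + 1 := by
  obtain ⟨g, hg⟩ := hb
  have hm : (0 : ℝ) < m := by exact_mod_cast g.pos
  suffices dvec w A b ≤ dvec w A a + 1 / m by
    rw [card_sub_quota_eq_mul_dvec g.pos.ne', card_sub_quota_eq_mul_dvec g.pos.ne']
    have := mul_le_mul_of_nonneg_left this hm.le
    rwa [mul_add, mul_one_div_cancel hm.ne'] at this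
  obtain rfl | hab := eq_or_ne a b
  · simp [hm.le]
  by_contra! hgap
  set A' := moveItem A g a
  have hga : g ∉ A a := disjoint_right.1 (hA.1.1 a b hab) hg
  have hA'a : A' a = insert g (A a) := if_pos rfl
  have hA'b : A' b = (A b).erase g := if_neg hab.symm
  have hA'k : ∀ k, k ≠ a → k ≠ b → A' k = A k := fun k hka hkb => by
    rw [show A' k = (A k).erase g from if_neg hka]
    exact erase_eq_of_notMem (disjoint_right.1 (hA.1.1 k b hkb) hg)
  have hda : dvec w A' a = dvec w A a + 1 / m := by
    simp only [dvec, hA'a, card_insert_of_notMem hga]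
    push_cast
    ring
  have hdb : dvec w A' b = dvec w A b - 1 / m := by
    simp only [dvec, hA'b, cast_card_erase_of_mem hg]
    ring
  have hlt := toLex_sort_lt_of_raise (f := dvec w A) (f' := dvec w A') (a := a) (b := b)
    (fun k hka hkb => by simp only [dvec, hA'k k hka hkb]) (by linarith [one_div_pos.2 hm])
    (by rw [hda]; linarith [one_div_pos.2 hm]) (by rw [hdb]; linarith)
  exact (hA.2 A' (hA.1.moveItem g a)).not_gt hlt

end Quota

theorem weg_satisfies_quotas_general (n m : ℕ)
    (w : Fin n → ℝ) (hw : ∀ i, 0 < w i)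
    (A : Fin n → Finset (Fin m)) (hWEG : IsWEG w A) :
    ∀ i : Fin n, ⌊(w i / ∑ j, w j) * (m : ℝ)⌋ ≤ ((A i).card : ℤ) ∧
      ((A i).card : ℤ) ≤ ⌈(w i / ∑ j, w j) * (m : ℝ)⌉ := by
  intro i
  have hW : 0 < ∑ j, w j := sum_pos (fun j _ => hw j) ⟨i, mem_univ i⟩
  set e : Fin n → ℝ := fun j => (A j).card - quota w m j
  have hsum : ∑ j, e j = 0 := hWEG.1.sum_card_sub_quota hW.ne'
  have hnonempty : ∀ j, 0 < e j → (A j).Nonempty := fun j hj => by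
    have : 0 ≤ quota w m j := mul_nonneg (div_pos (hw j) hW).le m.cast_nonneg
    exact card_pos.1 (Nat.cast_pos.1 (by linarith : (0 : ℝ) < (A j).card))
  change ⌊quota w m i⌋ ≤ _ ∧ _ ≤ ⌈quota w m i⌉
  rw [Int.floor_le_iff, Int.le_ceil_iff, Int.cast_natCast]
  have hei : e i = (A i).card - quota w m i := rfl
  constructor
  · by_contra! hlow
    obtain ⟨j, -, hj⟩ := exists_pos_of_sum_zero_of_exists_nonzero e hsum
      ⟨i, mem_univ i, by linarith⟩
    linarith [hWEG.card_sub_quota_le i (hnonempty j hj)]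
  · by_contra! hup
    obtain ⟨j, -, hj⟩ := exists_pos_of_sum_zero_of_exists_nonzero (-e) (by simp [hsum])
      ⟨i, mem_univ i, by rw [Pi.neg_apply]; linarith⟩
    rw [Pi.neg_apply] at hj
    linarith [hWEG.card_sub_quota_le j (hnonempty i (by linarith))]

/-- With identical items, every WEG allocation satisfies both lower and upper quota. -/
theorem weg_satisfies_quotas (n m : ℕ) (hn : 2 ≤ n)
    (w : Fin n → ℝ) (hw : ∀ i, 0 < w i)
    (A : Fin n → Finset (Fin m)) (hWEG : IsWEG w A) :
    ∀ i : Fin n, ⌊(w i / ∑ j, w j) * (m : ℝ)⌋ ≤ ((A i).card : ℤ) ∧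
      ((A i).card : ℤ) ≤ ⌈(w i / ∑ j, w j) * (m : ℝ)⌉ :=
  weg_satisfies_quotas_general n m w hw A hWEG
end
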